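/- arXiv:0908.0783 — 4 statements merged into one kernel-verified Lean document; each statement's English description precedes it below -/
import Mathlib

section
/- Let P be a finite metacyclic 2-group. If P is a nontrivial homocyclic group or a quaternion group of order 8, then the automorphism group Aut(P) is not a 2-group (i.e. |Aut(P)| is divisible by an odd prime). -/
/-- A group is *metacyclic* if it has a cyclic normal subgroup with cyclic quotient. -/
def IsMetacyclic (P : Type*) [Group P] : Prop :=
  ∃ (N : Subgroup P) (hN : N.Normal), IsCyclic N ∧
    letI := hN
    IsCyclic (P ⧸ N)

/-- A group is *homocyclic* if it is a direct product of two isomorphic cyclic groups. -/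
def IsHomocyclic (P : Type*) [Group P] : Prop :=
  ∃ n : ℕ, Nonempty (P ≃* (Multiplicative (ZMod n) × Multiplicative (ZMod n)))

/-- A finite `2`-group of order `2 ^ n` has *maximal class* if its nilpotency class is `n - 1`;
these are exactly the dihedral, semidihedral and generalized quaternion groups of order
at least `8` (so `n ≥ 3`).  The nilpotency class equals `n - 1` iff the `(n-1)`-st term of the
lower central series is trivial while the `(n-2)`-nd is not. -/
def IsMaximalClassTwoGroup (P : Type*) [Group P] : Prop :=
  ∃ n : ℕ, 3 ≤ n ∧ Nat.card P = 2 ^ n ∧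
    (⊤ : Subgroup P).lowerCentralSeries (n - 1) = ⊥ ∧ (⊤ : Subgroup P).lowerCentralSeries (n - 2) ≠ ⊥

/-- A group is *2-nilpotent* if it has a normal subgroup of odd order whose quotient
is a `2`-group (a normal `2`-complement). -/
def IsTwoNilpotent (G : Type*) [Group G] : Prop :=
  ∃ (N : Subgroup G) (hN : N.Normal), Odd (Nat.card N) ∧
    letI := hN
    IsPGroup 2 (G ⧸ N)

/-!
Both groups admit an automorphism of order 3: on `A × A` with `A` abelian the map
`(x, y) ↦ (y, (x y)⁻¹)`, and on `Q₈` the cyclic permutation `i ↦ j ↦ k ↦ i`.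
In a 2-group every element of order dividing 3 is trivial.
-/

theorem IsPGroup.eq_one_of_pow_eq_one {G : Type*} [Group G] {p q : ℕ} (hG : IsPGroup p G)
    (hpq : p.Coprime q) {g : G} (hg : g ^ q = 1) : g = 1 :=
  orderOf_eq_one_iff.mp ((hG.orderOf_coprime hpq g).eq_one_of_dvd (orderOf_dvd_of_pow_eq_one hg))

section ProdSelf

variable (A : Type*) [CommGroup A]

def MulAut.prodRotate : MulAut (A × A) where
  toFun p := (p.2, (p.1 * p.2)⁻¹)
  invFun p := ((p.1 * p.2)⁻¹, p.1)
  left_inv p := by ext <;> simp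
  right_inv p := by ext <;> simp
  map_mul' p q := by
    ext
    · rfl
    · simp only [Prod.snd_mul, Prod.fst_mul, mul_mul_mul_comm, mul_inv]

theorem MulAut.prodRotate_pow_three : MulAut.prodRotate A ^ 3 = 1 := by
  ext p <;> simp [pow_succ, MulAut.prodRotate]

theorem MulAut.prodRotate_ne_one [Nontrivial A] : MulAut.prodRotate A ≠ 1 := by
  intro h
  obtain ⟨a, ha⟩ := exists_ne (1 : A)
  exact ha (congrArg Prod.fst (DFunLike.congr_fun h (1, a)))

theorem not_isPGroup_two_mulAut_prod_self [Nontrivial A] : ¬ IsPGroup 2 (MulAut (A × A)) :=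
  fun hG => MulAut.prodRotate_ne_one A
    (hG.eq_one_of_pow_eq_one (by norm_num) (MulAut.prodRotate_pow_three A))

end ProdSelf

section Quaternion

open QuaternionGroup

/-- With `i = a 1`, `j = xa 0` and `k = i * j = xa 3`, this is `i ↦ j ↦ k ↦ i`. -/
def QuaternionGroup.cycleIJK : QuaternionGroup 2 → QuaternionGroup 2
  | a i => ![a 0, xa 0, a 2, xa 2] i
  | xa i => ![xa 3, a 3, xa 1, a 1] i

theorem QuaternionGroup.cycleIJK_cycleIJK_cycleIJK (x : QuaternionGroup 2) :
    cycleIJK (cycleIJK (cycleIJK x)) = x := by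
  revert x
  decide

def MulAut.quaternionCycle : MulAut (QuaternionGroup 2) where
  toFun := cycleIJK
  invFun := cycleIJK ∘ cycleIJK
  left_inv := cycleIJK_cycleIJK_cycleIJK
  right_inv := cycleIJK_cycleIJK_cycleIJK
  map_mul' := by decide

theorem MulAut.quaternionCycle_pow_three : MulAut.quaternionCycle ^ 3 = 1 :=
  MulEquiv.ext cycleIJK_cycleIJK_cycleIJK

theorem MulAut.quaternionCycle_ne_one : MulAut.quaternionCycle ≠ 1 := fun h =>
  absurd (DFunLike.congr_fun h (a 1)) (by decide)

theorem not_isPGroup_two_mulAut_quaternionGroup_two : ¬ IsPGroup 2 (MulAut (QuaternionGroup 2)) :=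
  fun hG => MulAut.quaternionCycle_ne_one
    (hG.eq_one_of_pow_eq_one (by norm_num) MulAut.quaternionCycle_pow_three)

end Quaternion

theorem aut_not_two_group_of_homocyclic_or_Q8_general (P : Type*) [Group P]
    (h : (IsHomocyclic P ∧ Nontrivial P) ∨ Nonempty (P ≃* QuaternionGroup 2)) :
    ¬ IsPGroup 2 (MulAut P) := by
  intro hP
  rcases h with ⟨⟨n, ⟨e⟩⟩, hnt⟩ | ⟨⟨e⟩⟩
  · have : Nontrivial (Multiplicative (ZMod n) × Multiplicative (ZMod n)) :=
      e.symm.surjective.nontrivial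
    have : Nontrivial (Multiplicative (ZMod n)) := by
      rcases subsingleton_or_nontrivial (Multiplicative (ZMod n)) with _ | h
      · exact absurd ‹Nontrivial (_ × _)› (not_nontrivial _)
      · exact h
    exact not_isPGroup_two_mulAut_prod_self _ (hP.of_equiv (MulAut.congr e))
  · exact not_isPGroup_two_mulAut_quaternionGroup_two (hP.of_equiv (MulAut.congr e))

/-- Converse of the lemma on automorphism groups: if a finite metacyclic 2-group `P` is a
nontrivial homocyclic group or a quaternion group of order 8, then `Aut(P)` is not a 2-group. -/
theorem aut_not_two_group_of_homocyclic_or_Q8 (P : Type*) [Group P] [Finite P]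
    (h2 : IsPGroup 2 P) (hmeta : IsMetacyclic P)
    (h : (IsHomocyclic P ∧ Nontrivial P) ∨ Nonempty (P ≃* QuaternionGroup 2)) :
    ¬ IsPGroup 2 (MulAut P) :=
  aut_not_two_group_of_homocyclic_or_Q8_general P h
end

section
/- Let P be a finite metacyclic 2-group and let Q be a proper subgroup of P isomorphic to C_{2^k} × C_{2^k} for some k ≥ 2. Then the conjugation action of N_P(Q)/Q on Q/Φ(Q) is not faithful, i.e. some element of N_P(Q) \ Q acts trivially on Q/Φ(Q) by conjugation. -/
/-!
Let `N ⊴ P` be cyclic with `P / N` cyclic. The image of `Q` in `P / N` is cyclic of exponent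
dividing `2 ^ k`, so `|N ∩ Q| ≥ |Q| / 2 ^ k = 2 ^ k ≥ 4`. Every element of `P` acts on the cyclic
group `N` by a power map `n ↦ n ^ s`.

If `N ≤ Q`, let `x` generate `P` modulo `N`. On the cyclic `2`-group `N` the exponent `s` is odd,
so `[x, n] = n ^ (s - 1)` is a square in `N`, and hence so is every commutator `[x, x ^ m n]`.

If `N ≰ Q`, pick `y ∈ N \ Q` with `y ^ 2 ∈ Q`. For `q ∈ Q`, `q` commutes with `y ^ 2`, so
`[y, q] ∈ N` has order at most `2`. It therefore lies in the subgroup of order `2` of `N`, which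
consists of squares of elements of the cyclic group `N ∩ Q` of order at least `4`.

In both cases `[x, Q]` consists of squares of elements of `Q`; thus `x` normalizes `Q`, and it acts
trivially on `Q / Φ(Q)` because `p`-th powers lie in the Frattini subgroup of a `p`-group.
-/

open Subgroup

theorem IsCyclic.mem_zpowers_of_orderOf_dvd {α : Type*} [Group α] [Finite α] [IsCyclic α]
    {x y : α} (h : orderOf x ∣ orderOf y) : x ∈ zpowers y := by
  classical
  have := Fintype.ofFinite α
  have hsub : (zpowers y : Set α).toFinset ⊆ Finset.univ.filter (· ^ orderOf y = 1) := by
    intro a ha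
    obtain ⟨i, rfl⟩ := by simpa using ha
    simp only [Finset.mem_filter, Finset.mem_univ, true_and]
    rw [← zpow_natCast, ← zpow_mul, mul_comm, zpow_mul, zpow_natCast, pow_orderOf_eq_one, one_zpow]
  -- `a ^ m = 1` has at most `m` solutions, and `zpowers y` already supplies `m` of them
  have heq := Finset.eq_of_subset_of_card_le hsub <| by
    rw [Set.toFinset_card, ← Nat.card_eq_fintype_card, SetLike.coe_sort_coe, Nat.card_zpowers]
    exact IsCyclic.card_pow_eq_one_le (orderOf_pos y)
  have hx : x ∈ Finset.univ.filter (· ^ orderOf y = 1) := by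
    simpa using orderOf_dvd_iff_pow_eq_one.mp h
  simpa [← heq] using hx

theorem IsPGroup.pow_mem_frattini {p : ℕ} [hp : Fact p.Prime] {H : Type*} [Group H] [Finite H]
    (hH : IsPGroup p H) (g : H) : g ^ p ∈ frattini H := by
  have := hH.isNilpotent
  simp only [frattini, Order.radical, mem_iInf]
  intro M hM
  have := NormalizerCondition.normal_of_coatom M Group.normalizerCondition_of_isNilpotent hM
  by_contra hgM
  have hsup : M ⊔ zpowers (g ^ p) = ⊤ := hM.2 _ (left_lt_sup.mpr (hgM ∘ zpowers_le.mp))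
  have hgen : QuotientGroup.mk' M g ∈ Subgroup.map (QuotientGroup.mk' M) (M ⊔ zpowers (g ^ p)) :=
    hsup ▸ mem_map_of_mem _ (mem_top g)
  rw [Subgroup.map_sup, QuotientGroup.map_mk'_self, bot_sup_eq, MonoidHom.map_zpowers, map_pow,
    QuotientGroup.mk'_apply] at hgen
  obtain ⟨z, hz⟩ := hgen
  -- `g = g ^ (p * z)` modulo `M`, so the order of `g` modulo `M` is prime to `p`
  have hdvd : (orderOf (g : H ⧸ M) : ℤ) ∣ p * z - 1 := by
    refine orderOf_dvd_iff_zpow_eq_one.mpr ?_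
    rw [zpow_sub_one, zpow_mul, zpow_natCast]
    exact mul_inv_eq_one.mpr hz
  have hg1 : (g : H ⧸ M) = 1 := by
    by_contra hne
    have hp1 : (p : ℤ) ∣ 1 := by
      have := (Int.natCast_dvd_natCast.mpr ((hH.to_quotient M).dvd_orderOf hne)).trans hdvd
      simpa using dvd_sub (dvd_mul_right (p : ℤ) z) this
    exact hp.out.not_dvd_one (Int.natCast_dvd_natCast.mp hp1)
  exact hgM (M.pow_mem ((QuotientGroup.eq_one_iff g).mp hg1) p)

theorem exists_mem_zpowers_notMem_sq_mem {G : Type*} [Group G] {H : Subgroup G} {g : G} {n : ℕ}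
    (hg : g ^ 2 ^ n = 1) (hgH : g ∉ H) : ∃ y ∈ zpowers g, y ∉ H ∧ y ^ 2 ∈ H := by
  induction n generalizing g with
  | zero => exact absurd ((show g = 1 by simpa using hg) ▸ H.one_mem) hgH
  | succ n ih =>
    by_cases hg2 : g ^ 2 ∈ H
    · exact ⟨g, mem_zpowers g, hgH, hg2⟩
    · obtain ⟨y, hy, hyH, hy2⟩ := ih (by rwa [← pow_mul, ← pow_succ']) hg2
      exact ⟨y, zpowers_le.mpr (pow_mem (mem_zpowers g) 2) hy, hyH, hy2⟩

theorem exists_eq_sq_of_sq_eq_one {G : Type*} [Group G] {N D : Subgroup G} [IsCyclic N]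
    [Finite N] (hDN : D ≤ N) (hD : 4 ∣ Nat.card D) {c : G} (hc : c ∈ N) (hc2 : c ^ 2 = 1) :
    ∃ r ∈ D, c = r ^ 2 := by
  have : IsCyclic D := isCyclic_of_le hDN
  obtain ⟨⟨d, hdD⟩, hd⟩ := IsCyclic.exists_ofOrder_eq_natCard (α := D)
  rw [orderOf_mk] at hd
  have hord : orderOf c ∣ orderOf (d ^ 2) := by
    rw [orderOf_pow_of_dvd two_ne_zero (hd ▸ (dvd_trans (by norm_num) hD)), hd]
    exact (orderOf_dvd_of_pow_eq_one hc2).trans (Nat.dvd_div_of_mul_dvd hD)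
  obtain ⟨z, hz⟩ : (⟨c, hc⟩ : N) ∈ zpowers (⟨d ^ 2, N.pow_mem (hDN hdD) 2⟩ : N) :=
    IsCyclic.mem_zpowers_of_orderOf_dvd (by simpa only [orderOf_mk] using hord)
  refine ⟨d ^ z, D.zpow_mem hdD z, ?_⟩
  rw [← zpow_natCast, ← zpow_mul, mul_comm, zpow_mul]
  simpa using (congrArg Subtype.val hz).symm

theorem card_dvd_mul_card_inf_of_isCyclic_quotient {G : Type*} [Group G] {N : Subgroup G}
    [N.Normal] [IsCyclic (G ⧸ N)] {Q : Subgroup G} {n : ℕ} (hQ : ∀ q ∈ Q, q ^ n = 1) :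
    Nat.card Q ∣ n * Nat.card (N ⊓ Q : Subgroup G) := by
  have hcard : Nat.card (N ⊓ Q : Subgroup G) * Nat.card (Q.map (QuotientGroup.mk' N)) =
      Nat.card Q := by
    have h := relIndex_ker Q (QuotientGroup.mk' N)
    rw [QuotientGroup.ker_mk'] at h
    simpa [relIndex_bot_left, h] using relIndex_inf_mul_relIndex ⊥ N Q
  have hexp : Nat.card (Q.map (QuotientGroup.mk' N)) ∣ n := by
    rw [← IsCyclic.exponent_eq_card]
    refine Monoid.exponent_dvd_of_forall_pow_eq_one ?_
    rintro ⟨_, q, hq, rfl⟩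
    exact Subtype.ext (by simpa using congrArg (QuotientGroup.mk' N) (hQ q hq))
  rw [← hcard, mul_comm n]
  exact mul_dvd_mul_left _ hexp

section CyclicNormalSubgroup

variable {G : Type*} [Group G] {N : Subgroup G} [N.Normal] [IsCyclic N]

theorem exists_conj_eq_zpow (g : G) : ∃ s : ℤ, ∀ n ∈ N, g * n * g⁻¹ = n ^ s := by
  obtain ⟨s, hs⟩ := MonoidHom.map_cyclic (MulAut.conjNormal (H := N) g).toMonoidHom
  exact ⟨s, fun n hn => by simpa using congrArg Subtype.val (hs ⟨n, hn⟩)⟩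

theorem exists_commutator_eq_sq_of_mem (hN : IsPGroup 2 N) (g : G) {n : G} (hn : n ∈ N) :
    ∃ w ∈ N, g * n * g⁻¹ * n⁻¹ = w ^ 2 := by
  obtain ⟨s, hs⟩ := exists_conj_eq_zpow (N := N) g
  obtain ⟨t, rfl | rfl⟩ := Int.even_or_odd' s
  · by_cases hn1 : n = 1
    · exact ⟨1, N.one_mem, by simp [hn1]⟩
    have hfin : orderOf n ≠ 0 := by
      simpa using ((hN.isOfFinOrder two_ne_zero ⟨n, hn⟩).orderOf_pos).ne'
    have h2 : 2 ∣ orderOf n := by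
      simpa using hN.dvd_orderOf (g := ⟨n, hn⟩) (by simpa using hn1)
    -- an even power map would kill the involution `a` of `N`
    set a := n ^ (orderOf n / 2)
    have ha : orderOf a = 2 := orderOf_pow_orderOf_div hfin h2
    have hconj : g * a * g⁻¹ = 1 := by
      rw [hs a (N.pow_mem hn _), zpow_mul, zpow_two, ← pow_two, ← ha, pow_orderOf_eq_one, one_zpow]
    simp [conj_eq_one_iff.mp hconj] at ha
  · exact ⟨n ^ t, N.zpow_mem hn t, by rw [hs n hn]; group⟩

theorem commutator_sq_eq_one_of_commute_sq {y q : G} (hy : y ∈ N) (hq : Commute q (y ^ 2)) :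
    (y * q * y⁻¹ * q⁻¹) ^ 2 = 1 := by
  obtain ⟨s, hs⟩ := exists_conj_eq_zpow (N := N) q
  have hsq : (y ^ 2) ^ s = y ^ 2 := by
    rw [← hs _ (N.pow_mem hy 2), hq.eq, mul_inv_cancel_right]
  calc (y * q * y⁻¹ * q⁻¹) ^ 2 = (y * (q * y * q⁻¹)⁻¹) ^ 2 := by group
    _ = y ^ 2 * ((y ^ 2) ^ s)⁻¹ := by rw [hs y hy]; group
    _ = 1 := by rw [hsq, mul_inv_cancel]

theorem exists_notMem_commutator_eq_sq_of_le [IsCyclic (G ⧸ N)] (hN : IsPGroup 2 N)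
    {Q : Subgroup G} (hNQ : N ≤ Q) (hQ : Q ≠ ⊤) :
    ∃ x ∉ Q, ∀ g : G, ∃ w ∈ N, x * g * x⁻¹ * g⁻¹ = w ^ 2 := by
  obtain ⟨ξ, hξ⟩ := IsCyclic.exists_generator (α := G ⧸ N)
  obtain ⟨x, rfl⟩ := QuotientGroup.mk_surjective ξ
  have hdecomp : ∀ g : G, ∃ m : ℤ, ∃ n ∈ N, g = x ^ m * n := by
    intro g
    obtain ⟨m, hm⟩ := hξ g
    exact ⟨m, (x ^ m)⁻¹ * g, QuotientGroup.eq.mp (by simpa using hm), by group⟩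
  refine ⟨x, fun hx => hQ (eq_top_iff.mpr fun g _ => ?_), fun g => ?_⟩
  · obtain ⟨m, n, hn, rfl⟩ := hdecomp g
    exact Q.mul_mem (Q.zpow_mem hx m) (hNQ hn)
  · obtain ⟨m, n, hn, rfl⟩ := hdecomp g
    obtain ⟨w, hwN, hw⟩ := exists_commutator_eq_sq_of_mem hN x hn
    refine ⟨x ^ m * w * (x ^ m)⁻¹, ‹N.Normal›.conj_mem w hwN _, ?_⟩
    calc x * (x ^ m * n) * x⁻¹ * (x ^ m * n)⁻¹ = x ^ m * (x * n * x⁻¹ * n⁻¹) * (x ^ m)⁻¹ := by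
          group
      _ = (x ^ m * w * (x ^ m)⁻¹) ^ 2 := by rw [hw, conj_pow]

theorem exists_notMem_commutator_eq_sq_of_not_le [Finite N] (hN : IsPGroup 2 N)
    {Q : Subgroup G} (hQ : ∀ a ∈ Q, ∀ b ∈ Q, Commute a b) (hNQ : ¬N ≤ Q)
    (hD : 4 ∣ Nat.card (N ⊓ Q : Subgroup G)) :
    ∃ y ∉ Q, ∀ q ∈ Q, ∃ r ∈ Q, y * q * y⁻¹ * q⁻¹ = r ^ 2 := by
  obtain ⟨g, hgN, hgQ⟩ := Set.not_subset.mp hNQ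
  obtain ⟨j, hj⟩ := hN ⟨g, hgN⟩
  obtain ⟨y, hyg, hyQ, hy2⟩ :=
    exists_mem_zpowers_notMem_sq_mem (by simpa using congrArg Subtype.val hj) hgQ
  have hyN : y ∈ N := zpowers_le.mpr hgN hyg
  refine ⟨y, hyQ, fun q hq => ?_⟩
  have hcN : y * q * y⁻¹ * q⁻¹ ∈ N := by
    simpa [mul_assoc] using N.mul_mem hyN (‹N.Normal›.conj_mem _ (N.inv_mem hyN) q)
  have hc2 := commutator_sq_eq_one_of_commute_sq hyN (hQ q hq _ hy2)
  obtain ⟨r, hr, hcr⟩ := exists_eq_sq_of_sq_eq_one inf_le_left hD hcN hc2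
  exact ⟨r, (mem_inf.mp hr).2, hcr⟩

theorem exists_notMem_commutator_eq_sq [Finite N] [IsCyclic (G ⧸ N)] (hN : IsPGroup 2 N)
    {Q : Subgroup G} (hQtop : Q ≠ ⊤) (hQ : ∀ a ∈ Q, ∀ b ∈ Q, Commute a b)
    (hD : 4 ∣ Nat.card (N ⊓ Q : Subgroup G)) :
    ∃ x ∉ Q, ∀ q ∈ Q, ∃ r ∈ Q, x * q * x⁻¹ * q⁻¹ = r ^ 2 := by
  by_cases hNQ : N ≤ Q
  · obtain ⟨x, hxQ, hx⟩ := exists_notMem_commutator_eq_sq_of_le hN hNQ hQtop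
    exact ⟨x, hxQ, fun q _ => (hx q).imp fun w ⟨hw, h⟩ => ⟨hNQ hw, h⟩⟩
  · exact exists_notMem_commutator_eq_sq_of_not_le hN hQ hNQ hD

end CyclicNormalSubgroup

theorem multiplicative_zmod_pow_eq_one (n : ℕ) (b : Multiplicative (ZMod n)) : b ^ n = 1 :=
  Multiplicative.toAdd.injective (by simp [nsmul_eq_mul])

theorem commute_of_mulEquiv_commGroup {G A : Type*} [Group G] [CommGroup A] {Q : Subgroup G}
    (e : Q ≃* A) : ∀ a ∈ Q, ∀ b ∈ Q, Commute a b := fun a ha b hb => by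
  simpa using ((Commute.all (e ⟨a, ha⟩) (e ⟨b, hb⟩)).map e.symm).map Q.subtype

theorem pow_eq_one_of_mulEquiv {G A : Type*} [Group G] [Group A] {Q : Subgroup G} (e : Q ≃* A)
    {n : ℕ} (hA : ∀ a : A, a ^ n = 1) : ∀ q ∈ Q, q ^ n = 1 := fun q hq => by
  have h : (⟨q, hq⟩ : Q) ^ n = 1 := e.injective (by rw [map_pow, map_one, hA])
  simpa using congrArg Subtype.val h

/-- Let `P` be a finite metacyclic 2-group and `Q < P` a proper subgroup isomorphic to
`C_{2^k} × C_{2^k}` with `k ≥ 2`.  Then the conjugation action of `N_P(Q)/Q` on `Q/Φ(Q)` is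
not faithful: some element of `N_P(Q) \ Q` acts trivially on `Q/Φ(Q)`. -/
theorem not_faithful_on_frattini_quotient (P : Type*) [Group P] [Finite P]
    (h2 : IsPGroup 2 P) (hmeta : IsMetacyclic P)
    (Q : Subgroup P) (hQlt : Q ≠ ⊤) (k : ℕ) (hk : 2 ≤ k)
    (hQ : Nonempty (↥Q ≃* (Multiplicative (ZMod (2 ^ k)) × Multiplicative (ZMod (2 ^ k))))) :
    ∃ x ∈ Subgroup.normalizer (Q : Set P), x ∉ Q ∧
      ∀ q ∈ Q, x * q * x⁻¹ * q⁻¹ ∈ (frattini ↥Q).map Q.subtype := by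
  obtain ⟨e⟩ := hQ
  obtain ⟨N, hN, hNcyc, hPN⟩ := hmeta
  have hexp : ∀ q ∈ Q, q ^ 2 ^ k = 1 := pow_eq_one_of_mulEquiv e fun a =>
    Prod.ext (multiplicative_zmod_pow_eq_one _ a.1) (multiplicative_zmod_pow_eq_one _ a.2)
  have hD : 4 ∣ Nat.card (N ⊓ Q : Subgroup P) := by
    have h := card_dvd_mul_card_inf_of_isCyclic_quotient (N := N) hexp
    rw [Nat.card_congr e.toEquiv, Nat.card_prod] at h
    simp only [Nat.card_eq_fintype_card, Fintype.card_multiplicative, ZMod.card] at h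
    exact (pow_dvd_pow 2 hk).trans (Nat.dvd_of_mul_dvd_mul_left (by positivity) h)
  obtain ⟨x, hxQ, hx⟩ := exists_notMem_commutator_eq_sq (h2.to_subgroup N) hQlt
    (commute_of_mulEquiv_commGroup e) hD
  refine ⟨x, mem_normalizer_fintype fun q hq => ?_, hxQ, fun q hq => ?_⟩
  · obtain ⟨r, hr, hxq⟩ := hx q hq
    rw [show x * q * x⁻¹ = r ^ 2 * q by rw [← hxq]; group]
    exact Q.mul_mem (Q.pow_mem hr 2) hq
  · obtain ⟨r, hr, hxq⟩ := hx q hq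
    exact ⟨⟨r, hr⟩ ^ 2, (h2.to_subgroup Q).pow_mem_frattini _, by simp [hxq]⟩
end

section
/- Let P be a finite metacyclic 2-group and let k ≥ 2. If Q₁ and Q₂ are subgroups of P both isomorphic to C_{2^k} × C_{2^k}, then Q₁ = Q₂. In particular, any subgroup Q of P isomorphic to C_{2^k} × C_{2^k} is normal in P, i.e. N_P(Q) = P. -/
/-!
Let `N ◁ P` be cyclic with `P/N` cyclic and `Q ≅ C_{2^k} × C_{2^k}`. Both `Q ∩ N` and `QN/N` are
cyclic of exponent dividing `2^k`, and their orders multiply to `2^{2k}`, so each has order `2^k`;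
being the unique subgroups of that order in the cyclic groups `N` and `P/N`, they do not depend
on `Q`. Hence a second such subgroup `Q'` lies in `QN`, and `x = qn ∈ Q'` with `q ∈ Q`, `n ∈ N`.
Conjugation by `q` acts on `N` as a power map `y ↦ y^b`; since `q` centralizes `Q ∩ N`, of order
`2^k ≥ 4`, we get `b ≡ 1 (mod 4)`. Then `1 = x^{2^k} = q^{2^k} n^{1 + b + ⋯ + b^{2^k-1}}` and the
exponent is `2^k` times an odd number, so `n^{2^k} = 1` and `n ∈ Q ∩ N`. Thus `Q' ≤ Q`, and by
symmetry `Q' = Q`; applied to the images of `Q` under automorphisms this makes `Q` characteristic.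
-/

open Subgroup

theorem Int.exists_odd_geom_sum_two_pow_eq {b : ℤ} (hb : 4 ∣ b - 1) (k : ℕ) :
    ∃ v : ℤ, Odd v ∧ ∑ i ∈ Finset.range (2 ^ k), b ^ i = 2 ^ k * v := by
  induction k with
  | zero => exact ⟨1, odd_one, by simp⟩
  | succ k ih =>
    obtain ⟨v, hv, hsum⟩ := ih
    obtain ⟨w, hw⟩ : 4 ∣ b ^ 2 ^ k - 1 := by
      simpa using (Int.ModEq.pow (2 ^ k) (Int.modEq_iff_dvd.mpr hb).symm).symm.dvd
    refine ⟨v * (2 * w + 1), hv.mul (odd_two_mul_add_one w), ?_⟩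
    rw [pow_succ, mul_two, Finset.sum_range_add, hsum]
    simp only [pow_add, ← Finset.mul_sum, hsum]
    linear_combination (2 ^ k * v) * hw

theorem Nat.card_multiplicative_zmod (m : ℕ) : Nat.card (Multiplicative (ZMod m)) = m :=
  (Nat.card_congr Multiplicative.toAdd).trans (Nat.card_zmod m)

abbrev Homocyclic (m : ℕ) : Type := Multiplicative (ZMod m) × Multiplicative (ZMod m)

theorem Homocyclic.card (m : ℕ) : Nat.card (Homocyclic m) = m * m := by
  rw [Nat.card_prod, Nat.card_multiplicative_zmod]

theorem Homocyclic.pow_eq_one {m : ℕ} (x : Homocyclic m) : x ^ m = 1 := by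
  have h (z : Multiplicative (ZMod m)) : z ^ m = 1 := by
    rw [← pow_card_eq_one' (x := z), Nat.card_multiplicative_zmod]
  exact Prod.ext (h x.1) (h x.2)

section

variable {G : Type*} [Group G]

theorem IsCyclic.card_dvd_of_forall_pow_eq_one [IsCyclic G] {m : ℕ} (h : ∀ x : G, x ^ m = 1) :
    Nat.card G ∣ m :=
  IsCyclic.exponent_eq_card (α := G) ▸ Monoid.exponent_dvd_of_forall_pow_eq_one h

theorem Subgroup.pow_card_eq_one {H : Subgroup G} {x : G} (hx : x ∈ H) : x ^ Nat.card H = 1 := by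
  have h := congrArg Subtype.val (pow_card_eq_one' (x := (⟨x, hx⟩ : H)))
  rwa [SubgroupClass.coe_pow, OneMemClass.coe_one] at h

theorem IsCyclic.mem_iff_pow_card_eq_one [Finite G] [IsCyclic G]
    (H : Subgroup G) {x : G} : x ∈ H ↔ x ^ Nat.card H = 1 := by
  classical
  have : Fintype G := Fintype.ofFinite G
  refine ⟨Subgroup.pow_card_eq_one, fun hx => ?_⟩
  let S : Finset G := {y | y ^ Nat.card H = 1}
  have hHS : (H : Set G).toFinset ⊆ S := fun y hy => by
    simpa [S] using Subgroup.pow_card_eq_one (Set.mem_toFinset.mp hy)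
  have hSH : S.card ≤ (H : Set G).toFinset.card := by
    rw [Set.toFinset_card, ← Nat.card_eq_fintype_card]
    exact IsCyclic.card_pow_eq_one_le Nat.card_pos
  have hxS : x ∈ S := by simpa [S] using hx
  rwa [← Finset.eq_of_subset_of_card_le hHS hSH, Set.mem_toFinset] at hxS

theorem Subgroup.mem_iff_pow_card_eq_one_of_le {H K : Subgroup G}
    [Finite K] [IsCyclic K] (hHK : H ≤ K) {x : G} (hx : x ∈ K) : x ∈ H ↔ x ^ Nat.card H = 1 := by
  have h := IsCyclic.mem_iff_pow_card_eq_one (H.subgroupOf K) (x := ⟨x, hx⟩)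
  rwa [mem_subgroupOf, Nat.card_congr (subgroupOfEquivOfLe hHK).toEquiv, Subtype.ext_iff] at h

theorem IsPGroup.eq_one_of_zpow_eq_one {p : ℕ} [Fact p.Prime]
    (hG : IsPGroup p G) {g : G} {v : ℤ} (hv : ¬ (p : ℤ) ∣ v) (h : g ^ v = 1) : g = 1 := by
  by_contra hg
  exact hv ((Int.natCast_dvd_natCast.mpr (hG.dvd_orderOf hg)).trans
    (orderOf_dvd_iff_zpow_eq_one.mpr h))

theorem SemiconjBy.orderOf_dvd_sub_one {q c : G} {b : ℤ}
    (h : SemiconjBy q (c ^ b) c) (hc : Commute q c) : (orderOf c : ℤ) ∣ b - 1 := by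
  rw [orderOf_dvd_iff_zpow_eq_one, zpow_sub_one, mul_inv_eq_one]
  exact mul_left_cancel (h.eq.trans hc.eq.symm)

theorem mul_pow_eq_pow_mul_zpow_geom_sum {q n : G} {b : ℤ}
    (h : SemiconjBy q (n ^ b) n) (t : ℕ) :
    (q * n) ^ t = q ^ t * n ^ ∑ i ∈ Finset.range t, b ^ i := by
  induction t with
  | zero => simp
  | succ t ih =>
    rw [pow_succ, ih, geom_sum_succ, zpow_add_one, zpow_mul, mul_assoc, ← mul_assoc (n ^ _),
      ← (h.zpow_right _).eq, pow_succ]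
    group

theorem exists_zpow_semiconjBy (N : Subgroup G) [N.Normal] [IsCyclic N]
    (q : G) : ∃ b : ℤ, ∀ y ∈ N, SemiconjBy q (y ^ b) y := by
  obtain ⟨b, hb⟩ := (MulAut.conjNormal q⁻¹ : MulAut N).toMonoidHom.map_cyclic
  refine ⟨b, fun y hy => ?_⟩
  have h := congrArg Subtype.val (hb ⟨y, hy⟩)
  simp only [MulEquiv.coe_toMonoidHom, MulAut.conjNormal_apply, inv_inv,
    SubgroupClass.coe_zpow] at h
  rw [SemiconjBy, ← h]
  group

theorem Subgroup.commute_of_mulEquiv {H : Type*} [CommGroup H] {Q : Subgroup G}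
    (e : Q ≃* H) {x y : G} (hx : x ∈ Q) (hy : y ∈ Q) : Commute x y := by
  have h : (⟨x, hx⟩ : Q) * ⟨y, hy⟩ = ⟨y, hy⟩ * ⟨x, hx⟩ :=
    e.injective (by rw [map_mul, map_mul, mul_comm])
  exact congrArg Subtype.val h

theorem Subgroup.card_inf_mul_card_map_mk (Q N : Subgroup G) [N.Normal] :
    Nat.card ↥(Q ⊓ N) * Nat.card ↥(Q.map (QuotientGroup.mk' N)) = Nat.card Q := by
  have h := relIndex_inf_mul_relIndex ⊥ N Q
  rw [bot_inf_eq, relIndex_bot_left, relIndex_bot_left, ← QuotientGroup.ker_mk' N,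
    relIndex_ker, QuotientGroup.ker_mk', inf_comm] at h
  exact h

theorem Subgroup.characteristic_of_forall_mulEquiv_le {H : Subgroup G}
    (h : ∀ K : Subgroup G, (K ≃* H) → K ≤ H) : H.Characteristic :=
  characteristic_iff_map_le.mpr fun φ =>
    h _ (H.equivMapOfInjective φ.toMonoidHom φ.injective).symm

theorem Subgroup.pow_eq_one_of_mulEquiv_homocyclic {Q : Subgroup G} {m : ℕ}
    (e : Q ≃* Homocyclic m) {x : G} (hx : x ∈ Q) : x ^ m = 1 := by
  have h : (⟨x, hx⟩ : Q) ^ m = 1 := e.injective (by rw [map_pow, map_one, Homocyclic.pow_eq_one])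
  simpa using congrArg Subtype.val h

theorem card_inf_eq_and_card_map_eq [Finite G] (N : Subgroup G) [N.Normal]
    [IsCyclic N] [IsCyclic (G ⧸ N)] {Q : Subgroup G} {m : ℕ} (e : Q ≃* Homocyclic m) :
    Nat.card ↥(Q ⊓ N) = m ∧ Nat.card ↥(Q.map (QuotientGroup.mk' N)) = m := by
  have hexp {x : G} (hx : x ∈ Q) : x ^ m = 1 := pow_eq_one_of_mulEquiv_homocyclic e hx
  have : IsCyclic ↥(Q ⊓ N) := isCyclic_of_le inf_le_right
  have hinf : Nat.card ↥(Q ⊓ N) ∣ m :=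
    IsCyclic.card_dvd_of_forall_pow_eq_one fun x => Subtype.ext (by simpa using hexp x.2.1)
  have hmap : Nat.card ↥(Q.map (QuotientGroup.mk' N)) ∣ m :=
    IsCyclic.card_dvd_of_forall_pow_eq_one fun y => by
      obtain ⟨q, hq, hy⟩ := y.2
      exact Subtype.ext (by rw [SubgroupClass.coe_pow, ← hy, ← map_pow, hexp hq, map_one]; rfl)
  have hprod := card_inf_mul_card_map_mk Q N
  rw [Nat.card_congr e.toEquiv, Homocyclic.card] at hprod
  have hm : 0 < m := by
    have : 0 < m * m := hprod ▸ Nat.mul_pos Nat.card_pos Nat.card_pos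
    exact Nat.pos_of_mul_pos_left this
  have hinf_le := Nat.le_of_dvd hm hinf
  have hmap_le := Nat.le_of_dvd hm hmap
  constructor <;> nlinarith

theorem le_of_mulEquiv_homocyclic [Finite G] (hG : IsPGroup 2 G)
    (N : Subgroup G) [N.Normal] [IsCyclic N] [IsCyclic (G ⧸ N)] {k : ℕ} (hk : 2 ≤ k)
    {Q₁ Q₂ : Subgroup G} (e₁ : Q₁ ≃* Homocyclic (2 ^ k)) (e₂ : Q₂ ≃* Homocyclic (2 ^ k)) :
    Q₂ ≤ Q₁ := by
  obtain ⟨hinf₁, hmap₁⟩ := card_inf_eq_and_card_map_eq N e₁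
  obtain ⟨-, hmap₂⟩ := card_inf_eq_and_card_map_eq N e₂
  have hmap : Q₂.map (QuotientGroup.mk' N) = Q₁.map (QuotientGroup.mk' N) := by
    ext y
    rw [IsCyclic.mem_iff_pow_card_eq_one, IsCyclic.mem_iff_pow_card_eq_one, hmap₁, hmap₂]
  have hsup : Q₂ ≤ Q₁ ⊔ N := by
    simpa [hmap, comap_map_eq] using le_comap_map (QuotientGroup.mk' N) Q₂
  intro x hx
  have hx' : x ∈ ((Q₁ ⊔ N : Subgroup G) : Set G) := hsup hx
  rw [mul_normal] at hx'
  obtain ⟨q, hq, n, hn, rfl⟩ := hx'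
  obtain ⟨b, hb⟩ := exists_zpow_semiconjBy N q
  have h4 : (4 : ℤ) ∣ b - 1 := by
    have : IsCyclic ↥(Q₁ ⊓ N) := isCyclic_of_le inf_le_right
    obtain ⟨c, hc⟩ := IsCyclic.exists_ofOrder_eq_natCard (α := ↥(Q₁ ⊓ N))
    have hdvd := (hb c c.2.2).orderOf_dvd_sub_one (commute_of_mulEquiv e₁ hq c.2.1)
    rw [Subgroup.orderOf_coe, hc, hinf₁] at hdvd
    exact (Int.natCast_dvd_natCast.mpr (pow_dvd_pow 2 hk)).trans hdvd
  obtain ⟨v, hv, hσ⟩ := Int.exists_odd_geom_sum_two_pow_eq h4 k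
  have hn2 : n ^ 2 ^ k = 1 := by
    have h := mul_pow_eq_pow_mul_zpow_geom_sum (hb n hn) (2 ^ k)
    rw [pow_eq_one_of_mulEquiv_homocyclic e₂ hx, pow_eq_one_of_mulEquiv_homocyclic e₁ hq, one_mul,
      hσ, zpow_mul, ← Nat.cast_ofNat, ← Nat.cast_pow, zpow_natCast] at h
    exact hG.eq_one_of_zpow_eq_one (by simpa [← even_iff_two_dvd] using hv) h.symm
  have hnQ : n ∈ Q₁ ⊓ N := (mem_iff_pow_card_eq_one_of_le inf_le_right hn).mpr (hinf₁ ▸ hn2)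
  exact Q₁.mul_mem hq hnQ.1

end

/-- In a finite metacyclic 2-group there is at most one subgroup isomorphic to
`C_{2^k} × C_{2^k}` for each fixed `k ≥ 2`; in particular such a subgroup is normal,
i.e. its normalizer is all of `P`. -/
theorem homocyclic_subgroup_unique (P : Type*) [Group P] [Finite P]
    (h2 : IsPGroup 2 P) (hmeta : IsMetacyclic P) (k : ℕ) (hk : 2 ≤ k)
    (Q₁ Q₂ : Subgroup P)
    (hQ₁ : Nonempty (↥Q₁ ≃* (Multiplicative (ZMod (2 ^ k)) × Multiplicative (ZMod (2 ^ k)))))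
    (hQ₂ : Nonempty (↥Q₂ ≃* (Multiplicative (ZMod (2 ^ k)) × Multiplicative (ZMod (2 ^ k))))) :
    Q₁ = Q₂ ∧ Q₁.Normal ∧ Subgroup.normalizer (Q₁ : Set P) = ⊤ := by
  obtain ⟨N, hN, hNcyc, hcyc⟩ := hmeta
  obtain ⟨e₁⟩ := hQ₁
  obtain ⟨e₂⟩ := hQ₂
  have hle {Q Q' : Subgroup P} (e : Q ≃* Homocyclic (2 ^ k)) (e' : Q' ≃* Homocyclic (2 ^ k)) :
      Q' ≤ Q :=
    le_of_mulEquiv_homocyclic h2 N hk e e'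
  have hchar : Q₁.Characteristic :=
    characteristic_of_forall_mulEquiv_le fun K eK => hle e₁ (eK.trans e₁)
  exact ⟨le_antisymm (hle e₂ e₁) (hle e₁ e₂), inferInstance,
    normalizer_eq_top_iff.mpr inferInstance⟩
end

section
/- Let P be a finite 2-group, let x ∈ P be an element such that the cyclic subgroup ⟨x⟩ is normal in P, and let Q ≤ P be an abelian subgroup with x² ∈ Q. Then the Frattini subgroup Φ(Q) centralizes x, i.e. Φ(Q) ≤ C_P(x). -/
/-!
Conjugation by `q ∈ Q` maps `x` to some `x ^ k`, and since `q` commutes with `x ^ 2 ∈ Q`,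
`x ^ (2 * (k - 1)) = 1`. If `k` is even, `q x q⁻¹ = x ^ k ∈ ⟨x ^ 2⟩` commutes with `q`, so `q`
centralizes `x`; if `k` is odd, `2 * (k - 1)` divides `k ^ 2 - 1`, so `q ^ 2` centralizes `x`.
Thus the centralizer of `x` in `Q` contains every square of `Q`. A subgroup `K` containing all
squares contains `Φ(Q)`: an element outside `K` is missed by a subgroup maximal with that
property, and such a subgroup, containing all squares, is a maximal subgroup.
-/

open Subgroup

theorem Subgroup.normal_of_sq_mem {G : Type*} [Group G] {M : Subgroup G}
    (hsq : ∀ g : G, g ^ 2 ∈ M) : M.Normal where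
  conj_mem n hn g := by
    have hconj : g * n * g⁻¹ = (g * n) ^ 2 * n⁻¹ * g⁻¹ ^ 2 := by simp only [sq]; group
    rw [hconj]
    exact M.mul_mem (M.mul_mem (hsq _) (M.inv_mem hn)) (hsq _)

theorem Subgroup.exists_le_maximal_notMem {G : Type*} [Group G] {K : Subgroup G} {a : G}
    (ha : a ∉ K) : ∃ M, K ≤ M ∧ Maximal (fun N : Subgroup G => a ∉ N) M := by
  refine zorn_le_nonempty₀ {N | a ∉ N}
    (fun c hcs hc N hN => ⟨sSup c, ?_, fun _ => le_sSup⟩) K ha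
  show a ∉ sSup c
  rw [mem_sSup_of_directedOn ⟨N, hN⟩ hc.directedOn]
  rintro ⟨L, hL, haL⟩
  exact hcs hL haL

theorem Subgroup.isCoatom_of_maximal_notMem {G : Type*} [Group G] {M : Subgroup G} {a : G}
    (hM : Maximal (fun N : Subgroup G => a ∉ N) M) (hsq : ∀ g : G, g ^ 2 ∈ M) :
    IsCoatom M := by
  have := normal_of_sq_mem hsq
  refine ⟨fun h => hM.prop (h ▸ mem_top a), fun N hMN => eq_top_iff.mpr fun g _ => ?_⟩
  have haN : a ∈ N := by_contra fun h => hMN.not_ge (hM.2 h hMN.le)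
  by_cases hgM : g ∈ M
  · exact hMN.le hgM
  have hag : a ∈ zpowers g ⊔ M := by_contra fun h =>
    hgM (hM.2 h le_sup_right (mem_sup_left (mem_zpowers g)))
  rw [← SetLike.mem_coe, mul_normal, Set.mem_mul] at hag
  obtain ⟨_, ⟨c, rfl⟩, m, hm, rfl⟩ := hag
  simp only at haN hM
  obtain ⟨t, rfl | rfl⟩ := Int.even_or_odd' c
  · exact absurd (M.mul_mem (by rw [zpow_mul, zpow_ofNat]; exact zpow_mem (hsq g) t) hm) hM.prop
  · have : g = ((g ^ 2) ^ t)⁻¹ * (g ^ (2 * t + 1) * m) * m⁻¹ := by group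
    rw [this]
    exact N.mul_mem (N.mul_mem (N.inv_mem (hMN.le (zpow_mem (hsq g) t))) haN)
      (N.inv_mem (hMN.le hm))

theorem frattini_le_of_sq_mem {G : Type*} [Group G] {K : Subgroup G}
    (hK : ∀ g : G, g ^ 2 ∈ K) : frattini G ≤ K := by
  intro a ha
  by_contra haK
  obtain ⟨M, hKM, hM⟩ := exists_le_maximal_notMem haK
  exact hM.prop (frattini_le_coatom (isCoatom_of_maximal_notMem hM fun g => hKM (hK g)) ha)

theorem commute_sq_left_of_commute_sq_right {G : Type*} [Group G] {x q : G}
    (hx : (zpowers x).Normal) (hq : Commute q (x ^ 2)) : Commute (q ^ 2) x := by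
  obtain ⟨k, hk⟩ : ∃ k : ℤ, x ^ k = MulAut.conj q x :=
    mem_zpowers_iff.mp (hx.conj_mem x (mem_zpowers x) q)
  obtain ⟨m, rfl | rfl⟩ := Int.even_or_odd' k
  · have hqk : Commute (MulAut.conj q q) (MulAut.conj q x) := by
      rw [← hk, MulAut.conj_apply, mul_inv_cancel_right, zpow_mul, zpow_ofNat]
      exact hq.zpow_right m
    exact (commute_map_iff (MulAut.conj q).injective).mp hqk |>.pow_left 2
  · have hx4m : x ^ (4 * m) = 1 := by
      have : x ^ (2 * (2 * m + 1)) = x ^ 2 := by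
        rw [mul_comm, zpow_mul, hk, zpow_ofNat, ← map_pow, MulAut.conj_apply, hq.eq,
          mul_inv_cancel_right]
      rw [show 2 * (2 * m + 1) = 4 * m + 2 by ring, zpow_add, zpow_ofNat] at this
      simpa using this
    have : MulAut.conj (q ^ 2) x = x := by
      rw [map_pow, pow_two, MulAut.mul_apply, ← hk, map_zpow, ← hk, ← zpow_mul,
        show (2 * m + 1) * (2 * m + 1) = 4 * m * (m + 1) + 1 by ring, zpow_add, zpow_mul, hx4m,
        one_zpow, one_mul, zpow_one]
    rwa [MulAut.conj_apply, mul_inv_eq_iff_eq_mul] at this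

theorem frattini_centralizes_general (P : Type*) [Group P]
    (x : P) (hx : (Subgroup.zpowers x).Normal)
    (Q : Subgroup P) (hab : ∀ a ∈ Q, ∀ b ∈ Q, a * b = b * a) (hx2 : x ^ 2 ∈ Q) :
    (frattini ↥Q).map Q.subtype ≤ Subgroup.centralizer {x} := by
  rw [map_le_iff_le_comap]
  refine frattini_le_of_sq_mem fun q => mem_centralizer_singleton_iff.mpr ?_
  exact (commute_sq_left_of_commute_sq_right hx (hab q q.2 _ hx2)).eq

/-- Let `P` be a finite 2-group, `x ∈ P` with `⟨x⟩` normal in `P`, and `Q ≤ P` an abelian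
subgroup with `x² ∈ Q`.  Then the Frattini subgroup `Φ(Q)` centralizes `x`. -/
theorem frattini_centralizes (P : Type*) [Group P] [Finite P] (h2 : IsPGroup 2 P)
    (x : P) (hx : (Subgroup.zpowers x).Normal)
    (Q : Subgroup P) (hab : ∀ a ∈ Q, ∀ b ∈ Q, a * b = b * a) (hx2 : x ^ 2 ∈ Q) :
    (frattini ↥Q).map Q.subtype ≤ Subgroup.centralizer {x} :=
  frattini_centralizes_general P x hx Q hab hx2
end
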